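/- Fix positive integers s, t, α with α ≤ min s t, and a positive integer v with α * v = (s+1) * (s*t + α). Set k = s*(t+1), λ = s − 1 + t*(α − 1), μ = α*(t+1). Let f and g be natural numbers satisfying f * (α*(s+t+1−α)) = s*t*(s*t+s+t+1) and g * (α*(s+t+1−α)) = s*(s*t+α)*(s+1−α). Let G be a simple graph on Fin v with G.IsSRGWith v k λ μ. Then the characteristic polynomial of G.adjMatrix ℚ equals (X − k) * (X − ((s : ℚ) − α))^f * (X + ((t : ℚ) + 1))^g in ℚ[X]. -/

import Mathlib

/-!
The adjacency matrix `A` of a strongly regular graph satisfies `A² = (λ - μ) A + (k - μ) I + μ J`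
and `A J = k J`, so `(A - k)(A - r)(A - s') = 0` for `r = s - α`, `s' = -(t + 1)`; as `A` is
symmetric, its eigenvalues lie in `{k, r, s'}`. Their multiplicities solve the Vandermonde system
given by the traces `v, 0, v k` of `I, A, A²`, which is nonsingular since `k, r, s'` are distinct,
and `(1, f, g)` solves the same system.
-/

open Polynomial Finset Matrix

@[to_additive]
theorem Finset.prod_comp_eq_prod_pow_card_fiber {ι κ M : Type*} [Fintype ι] [DecidableEq κ]
    [CommMonoid M] {e : ι → κ} {S : Finset κ} (he : ∀ i, e i ∈ S) (φ : κ → M) :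
    ∏ i, φ (e i) = ∏ x ∈ S, φ x ^ #{i | e i = x} := by
  rw [prod_comp]
  refine prod_subset (fun x hx => ?_) (fun x _ hx => ?_)
  · obtain ⟨i, -, rfl⟩ := mem_image.mp hx
    exact he i
  · rw [card_eq_zero.mpr, pow_zero]
    exact filter_eq_empty_iff.mpr fun i _ hi => hx (mem_image.mpr ⟨i, mem_univ _, hi⟩)

theorem eq_of_vandermonde_three {K : Type*} [Field K] {a b c x y z x' y' z' : K}
    (hab : a ≠ b) (hac : a ≠ c) (hbc : b ≠ c)
    (h₀ : x + y + z = x' + y' + z')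
    (h₁ : x * a + y * b + z * c = x' * a + y' * b + z' * c)
    (h₂ : x * a ^ 2 + y * b ^ 2 + z * c ^ 2 = x' * a ^ 2 + y' * b ^ 2 + z' * c ^ 2) :
    x = x' ∧ y = y' ∧ z = z' := by
  have ha : (x - x') * ((a - b) * (a - c)) = 0 := by
    linear_combination h₂ - (b + c) * h₁ + b * c * h₀
  have hb : (y - y') * ((b - a) * (b - c)) = 0 := by
    linear_combination h₂ - (a + c) * h₁ + a * c * h₀
  have hc : (z - z') * ((c - a) * (c - b)) = 0 := by
    linear_combination h₂ - (a + b) * h₁ + a * b * h₀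
  simp only [mul_eq_zero, sub_eq_zero, hab, hac, hbc, hab.symm, hac.symm, hbc.symm,
    or_false] at ha hb hc
  exact ⟨ha, hb, hc⟩

namespace Matrix.IsHermitian

variable {𝕜 n : Type*} [RCLike 𝕜] [Fintype n] [DecidableEq n] {A : Matrix n n 𝕜}

theorem eval_eigenvalues_eq_zero_of_aeval_eq_zero (hA : A.IsHermitian) {p : ℝ[X]}
    (hp : aeval A p = 0) (i : n) : p.eval (hA.eigenvalues i) = 0 := by
  have : Nonempty n := ⟨i⟩
  have := spectrum.subset_polynomial_aeval A p ⟨_, hA.eigenvalues_mem_spectrum_real i, rfl⟩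
  rwa [hp, spectrum.zero_eq, Set.mem_singleton_iff] at this

theorem trace_pow_eq_sum_eigenvalues_pow (hA : A.IsHermitian) (m : ℕ) :
    (A ^ m).trace = ∑ i, (hA.eigenvalues i : 𝕜) ^ m := by
  conv_lhs => rw [hA.spectral_theorem, ← map_pow, Unitary.conjStarAlgAut_apply, trace_mul_cycle,
    Unitary.coe_star_mul_self, one_mul, diagonal_pow, trace_diagonal]
  simp

theorem charpoly_eq_of_aeval_eq_zero {A : Matrix n n ℝ} (hA : A.IsHermitian) {a b c : ℝ}
    (hab : a ≠ b) (hac : a ≠ c) (hbc : b ≠ c)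
    (hp : aeval A ((X - C a) * (X - C b) * (X - C c)) = 0) {x y z : ℕ}
    (h₀ : (Fintype.card n : ℝ) = x + y + z)
    (h₁ : A.trace = x * a + y * b + z * c)
    (h₂ : (A ^ 2).trace = x * a ^ 2 + y * b ^ 2 + z * c ^ 2) :
    A.charpoly = (X - C a) ^ x * (X - C b) ^ y * (X - C c) ^ z := by
  have hmem : ∀ i, hA.eigenvalues i ∈ ({a, b, c} : Finset ℝ) := by
    intro i
    simpa [sub_eq_zero, or_assoc] using hA.eval_eigenvalues_eq_zero_of_aeval_eq_zero hp i
  have htrace (j : ℕ) : (A ^ j).trace =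
      #{i | hA.eigenvalues i = a} * a ^ j + #{i | hA.eigenvalues i = b} * b ^ j +
        #{i | hA.eigenvalues i = c} * c ^ j := by
    rw [hA.trace_pow_eq_sum_eigenvalues_pow]
    simp only [RCLike.ofReal_real_eq_id, id]
    rw [sum_comp_eq_sum_nsmul_card_fiber hmem (· ^ j)]
    simp [hab, hac, hbc, add_assoc]
  obtain ⟨ha, hb, hc⟩ := eq_of_vandermonde_three (x := (x : ℝ)) (y := (y : ℝ)) (z := (z : ℝ))
    hab hac hbc (by simpa [h₀] using htrace 0) (by simpa [h₁] using htrace 1)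
    (by simpa [h₂] using htrace 2)
  rw [hA.charpoly_eq]
  simp only [RCLike.ofReal_real_eq_id, id]
  rw [prod_comp_eq_prod_pow_card_fiber hmem (X - C ·)]
  simp [hab, hac, hbc, mul_assoc, Nat.cast_inj.mp ha, Nat.cast_inj.mp hb, Nat.cast_inj.mp hc]

end Matrix.IsHermitian

namespace SimpleGraph

variable {V : Type*} {G : SimpleGraph V} [DecidableRel G.Adj]

theorem adjMatrix_map {R S : Type*} [NonAssocSemiring R] [NonAssocSemiring S] (f : R →+* S) :
    (G.adjMatrix R).map f = G.adjMatrix S := by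
  ext i j
  simp [adjMatrix_apply, apply_ite f]

variable [Fintype V] {R : Type*} [CommRing R] {n k ℓ μ : ℕ}

theorem IsRegularOfDegree.adjMatrix_mul_of_one (h : G.IsRegularOfDegree k) :
    G.adjMatrix R * of 1 = (k : R) • of 1 := by
  ext i j
  simp [adjMatrix_mul_apply, h i]

variable [DecidableEq V]

theorem IsRegularOfDegree.trace_adjMatrix_sq (h : G.IsRegularOfDegree k) :
    (G.adjMatrix R ^ 2).trace = Fintype.card V * k := by
  simp_rw [trace, Matrix.diag, sq, adjMatrix_mul_self_apply_self, h _, sum_const, card_univ,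
    nsmul_eq_mul]

theorem IsSRGWith.adjMatrix_sq (h : G.IsSRGWith n k ℓ μ) :
    G.adjMatrix R ^ 2 =
      ((ℓ : R) - μ) • G.adjMatrix R + ((k : R) - μ) • 1 + (μ : R) • of 1 := by
  classical
  have hcompl : Gᶜ.adjMatrix R = of 1 - 1 - G.adjMatrix R := by
    rw [← G.compl_adjMatrix_eq_adjMatrix_compl R,
      ← G.one_add_adjMatrix_add_compl_adjMatrix_eq_of_one R]
    abel
  rw [h.matrix_eq, hcompl, ← Nat.cast_smul_eq_nsmul R, ← Nat.cast_smul_eq_nsmul R,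
    ← Nat.cast_smul_eq_nsmul R]
  module

theorem IsSRGWith.aeval_adjMatrix_eq_zero (h : G.IsSRGWith n k ℓ μ) {r σ : R}
    (hsum : r + σ = ℓ - μ) (hprod : r * σ = μ - k) :
    aeval (G.adjMatrix R) ((X - C (k : R)) * (X - C r) * (X - C σ)) = 0 := by
  set A := G.adjMatrix R
  have hquad : (A - r • 1) * (A - σ • 1) = (μ : R) • of 1 := by
    calc (A - r • 1) * (A - σ • 1) = A ^ 2 - (r + σ) • A + (r * σ) • 1 := by
          simp only [sq, sub_mul, mul_sub, Matrix.smul_mul, Matrix.mul_smul, smul_smul, one_mul,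
            mul_one]
          module
      _ = (μ : R) • of 1 := by rw [h.adjMatrix_sq, hsum, hprod]; module
  calc aeval A ((X - C (k : R)) * (X - C r) * (X - C σ))
      = (A - (k : R) • 1) * ((A - r • 1) * (A - σ • 1)) := by
        simp only [map_mul, map_sub, aeval_X, aeval_C, Algebra.algebraMap_eq_smul_one, mul_assoc]
    _ = 0 := by
        rw [hquad, Matrix.mul_smul, sub_mul, h.regular.adjMatrix_mul_of_one, Matrix.smul_mul,
          one_mul, sub_self, smul_zero]

end SimpleGraph

theorem pg_multiplicities_solve_trace_equations {s t α v f g : ℕ} (hα : 0 < α) (hαs : α ≤ s)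
    (hveq : α * v = (s + 1) * (s * t + α))
    (hf : f * (α * (s + t + 1 - α)) = s * t * (s * t + s + t + 1))
    (hg : g * (α * (s + t + 1 - α)) = s * (s * t + α) * (s + 1 - α)) :
    (v : ℝ) = 1 + f + g ∧
      (0 : ℝ) = 1 * (s * (t + 1)) + f * (s - α) + g * -(t + 1) ∧
      (v : ℝ) * (s * (t + 1)) =
        1 * (s * (t + 1)) ^ 2 + f * (s - α) ^ 2 + g * (-(t + 1)) ^ 2 := by
  set D : ℝ := α * (s + t + 1 - α)
  have hαR : (α : ℝ) ≠ 0 := by positivity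
  have hD : D ≠ 0 := by
    have : (α : ℝ) ≤ s := by exact_mod_cast hαs
    exact mul_ne_zero hαR (by linarith)
  have hvR : (α : ℝ) * v = (s + 1) * (s * t + α) := by exact_mod_cast hveq
  have hfR : f * D = s * t * (s * t + s + t + 1) := by
    have := congrArg (Nat.cast : ℕ → ℝ) hf
    push_cast [Nat.cast_sub (by omega : α ≤ s + t + 1)] at this
    exact this
  have hgR : g * D = s * (s * t + α) * (s + 1 - α) := by
    have := congrArg (Nat.cast : ℕ → ℝ) hg
    push_cast [Nat.cast_sub (by omega : α ≤ s + t + 1), Nat.cast_sub (by omega : α ≤ s + 1)]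
      at this
    exact this
  refine ⟨?_, ?_, ?_⟩
  · apply mul_left_cancel₀ (mul_ne_zero hαR hD)
    linear_combination D * hvR - α * hfR - α * hgR
  · apply mul_right_cancel₀ hD
    linear_combination (t + 1) * hgR - (s - α) * hfR
  · apply mul_left_cancel₀ (mul_ne_zero hαR hD)
    linear_combination s * (t + 1) * D * hvR - α * (s - α) ^ 2 * hfR - α * (t + 1) ^ 2 * hgR

theorem stmt_19_general (s t α v : ℕ) (hα : 0 < α)
    (hmin : α ≤ min s t)
    (hveq : α * v = (s + 1) * (s * t + α))
    (f g : ℕ)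
    (hf : f * (α * (s + t + 1 - α)) = s * t * (s * t + s + t + 1))
    (hg : g * (α * (s + t + 1 - α)) = s * (s * t + α) * (s + 1 - α))
    (G : SimpleGraph (Fin v)) [DecidableRel G.Adj]
    (hG : G.IsSRGWith v (s * (t + 1)) (s - 1 + t * (α - 1)) (α * (t + 1))) :
    (G.adjMatrix ℚ).charpoly =
      (X - C ((s * (t + 1) : ℕ) : ℚ)) *
        (X - C ((s : ℚ) - (α : ℚ))) ^ f *
        (X + C ((t : ℚ) + 1)) ^ g := by
  have hαs : α ≤ s := hmin.trans (min_le_left _ _)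
  have hαsR : (α : ℝ) ≤ s := by exact_mod_cast hαs
  have hαR : (0 : ℝ) < α := by exact_mod_cast hα
  obtain ⟨h₀, h₁, h₂⟩ := pg_multiplicities_solve_trace_equations hα hαs hveq hf hg
  have hannihilate := hG.aeval_adjMatrix_eq_zero (R := ℝ) (r := s - α) (σ := -(t + 1))
    (by push_cast [Nat.cast_sub (hα.trans_le hαs), Nat.cast_sub hα]; ring) (by push_cast; ring)
  have hcharpoly := (G.isHermitian_adjMatrix ℝ).charpoly_eq_of_aeval_eq_zero
    (by push_cast; nlinarith) (by push_cast; nlinarith) (by linarith) hannihilate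
    (x := 1) (y := f) (z := g) (by simpa using h₀)
    (by simpa [SimpleGraph.trace_adjMatrix] using h₁)
    (by rw [hG.regular.trace_adjMatrix_sq]; simpa using h₂)
  apply map_injective (algebraMap ℚ ℝ) (algebraMap ℚ ℝ).injective
  rw [← charpoly_map, G.adjMatrix_map, hcharpoly]
  simp [sub_eq_add_neg]

/-- Lemma 3.1 together with the multiplicity formulas (3.5)–(3.6): the
characteristic polynomial of the adjacency matrix of the point graph of a
partial geometry `pg(s,t,α)` is `(X−k)(X−(s−α))^f (X+(t+1))^g`, where
`f = st(st+s+t+1)/(α(s+t+1−α))` and `g = s(st+α)(s+1−α)/(α(s+t+1−α))`. -/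
theorem stmt_19 (s t α v : ℕ) (hs : 0 < s) (ht : 0 < t) (hα : 0 < α)
    (hmin : α ≤ min s t) (hv : 0 < v)
    (hveq : α * v = (s + 1) * (s * t + α))
    (f g : ℕ)
    (hf : f * (α * (s + t + 1 - α)) = s * t * (s * t + s + t + 1))
    (hg : g * (α * (s + t + 1 - α)) = s * (s * t + α) * (s + 1 - α))
    (G : SimpleGraph (Fin v)) [DecidableRel G.Adj]
    (hG : G.IsSRGWith v (s * (t + 1)) (s - 1 + t * (α - 1)) (α * (t + 1))) :
    (G.adjMatrix ℚ).charpoly =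
      (X - C ((s * (t + 1) : ℕ) : ℚ)) *
        (X - C ((s : ℚ) - (α : ℚ))) ^ f *
        (X + C ((t : ℚ) + 1)) ^ g :=
  stmt_19_general s t α v hα hmin hveq f g hf hg G hG
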